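/- (Chen's identity for the tropical non-strict signature) Let z = (z_1, z_2, …) be a sequence of real numbers, 0 ≤ p ≤ r ≤ q integers, and w a word with letters in ℤ \ {0}. Then ⟨ISS^{(idem)}_{p,q}(z), w⟩ = min_{uv = w} ( ⟨ISS^{(idem)}_{p,r}(z), u⟩ + ⟨ISS^{(idem)}_{r,q}(z), v⟩ ), the minimum over all len(w)+1 ways of writing w as a concatenation w = uv of two (possibly empty) words (with the convention (+∞) + x = +∞). -/

import Mathlib

/-!
Induction on the word. The first index `j₁` of an admissible tuple lies either in `(p, r]`, where
the rest of the tuple is split at `r` by the induction hypothesis (started at `j₁ - 1`, which is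
where non-strictness enters) and the first letter joins the prefix `u`, or in `(r, q]`, where the
whole tuple lies in `(r, q]` and `u` is empty. Since adding a constant commutes with finite minima
in `ℝ ∪ {+∞}`, the two minima can be exchanged.
-/

/-- The tropical (min-plus) **non-strict** iterated-sums signature coefficient
`⟨ISS^(idem)_{s,t}(z), w⟩ = min_{s < j_1 ≤ ⋯ ≤ j_k ≤ t} (w_1 z_{j_1} + ⋯ + w_k z_{j_k})`
of a real sequence `z`, for a word `w` with integer letters; it takes values in
`ℝ ∪ {+∞}` (with `(+∞) + x = +∞`), is `0` on the empty word, and `+∞` when the index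
set is empty. -/
noncomputable def tropISS (z : ℕ → ℝ) : ℕ → ℕ → List ℤ → WithTop ℝ
  | _, _, [] => 0
  | s, t, a :: w =>
      (Finset.Ioc s t).inf fun j => (((a : ℝ) * z j : ℝ) : WithTop ℝ) + tropISS z (j - 1) t w

namespace Finset

theorem inf_range_succ' {α : Type*} [SemilatticeInf α] [OrderTop α] (n : ℕ) (f : ℕ → α) :
    (range (n + 1)).inf f = f 0 ⊓ (range n).inf fun i => f (i + 1) := by
  rw [range_add_one', inf_insert, inf_map]
  rfl

variable {ι α : Type*} [LinearOrderedAddCommMonoidWithTop α]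

theorem inf_add (s : Finset ι) (f : ι → α) (c : α) :
    s.inf f + c = s.inf fun i => f i + c :=
  apply_inf_eq_inf_comp_of_linearOrder (· + c) (fun _ _ h => add_le_add_left h c) (top_add c)

theorem add_inf (s : Finset ι) (f : ι → α) (c : α) :
    c + s.inf f = s.inf fun i => c + f i := by
  simpa only [add_comm c] using s.inf_add f c

end Finset

section tropISS

variable (z : ℕ → ℝ)

@[simp]
theorem tropISS_nil (s t : ℕ) : tropISS z s t [] = 0 :=
  rfl

theorem tropISS_cons (s t : ℕ) (a : ℤ) (w : List ℤ) :
    tropISS z s t (a :: w) =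
      (Finset.Ioc s t).inf fun j => ((a * z j : ℝ) : WithTop ℝ) + tropISS z (j - 1) t w :=
  rfl

theorem tropISS_cons_eq_inf {s r t : ℕ} (hsr : s ≤ r) (hrt : r ≤ t) (a : ℤ) (w : List ℤ) :
    tropISS z s t (a :: w) =
      ((Finset.Ioc s r).inf fun j => ((a * z j : ℝ) : WithTop ℝ) + tropISS z (j - 1) t w) ⊓
        tropISS z r t (a :: w) := by
  rw [tropISS_cons, tropISS_cons, ← Finset.Ioc_union_Ioc_eq_Ioc hsr hrt, Finset.inf_union]

theorem tropISS_eq_inf_take_add_drop {p r q : ℕ} (hpr : p ≤ r) (hrq : r ≤ q) (w : List ℤ) :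
    tropISS z p q w = (Finset.range (w.length + 1)).inf fun i =>
      tropISS z p r (w.take i) + tropISS z r q (w.drop i) := by
  induction w generalizing p with
  | nil => simp
  | cons a w ih =>
    have first_index_le_r : ((Finset.Ioc p r).inf fun j =>
          ((a * z j : ℝ) : WithTop ℝ) + tropISS z (j - 1) q w) =
        (Finset.range (w.length + 1)).inf fun i =>
          tropISS z p r (a :: w.take i) + tropISS z r q (w.drop i) := by
      calc _ = (Finset.Ioc p r).inf fun j => (Finset.range (w.length + 1)).inf fun i =>
                ((a * z j : ℝ) : WithTop ℝ) +
                  (tropISS z (j - 1) r (w.take i) + tropISS z r q (w.drop i)) := by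
            refine Finset.inf_congr rfl fun j hj => ?_
            rw [ih (by grind), Finset.add_inf]
        _ = _ := by
            rw [Finset.inf_comm]
            refine Finset.inf_congr rfl fun i _ => ?_
            simp only [tropISS_cons, Finset.inf_add, add_assoc]
    rw [tropISS_cons_eq_inf z hpr hrq, first_index_le_r, List.length_cons,
      Finset.inf_range_succ' (w.length + 1), inf_comm]
    simp only [List.take_zero, List.drop_zero, List.take_succ_cons, List.drop_succ_cons,
      tropISS_nil, zero_add]

end tropISS

theorem trop_issi_chen_general (z : ℕ → ℝ) (p r q : ℕ) (hpr : p ≤ r) (hrq : r ≤ q)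
    (w : List ℤ) :
    tropISS z p q w =
      (Finset.range (w.length + 1)).inf fun i =>
        tropISS z p r (w.take i) + tropISS z r q (w.drop i) :=
  tropISS_eq_inf_take_add_drop z hpr hrq w

/-- **Chen's identity for the tropical non-strict signature.** For a real sequence `z`,
integers `0 ≤ p ≤ r ≤ q`, and a word `w` with letters in `ℤ \ {0}`:
`⟨ISS^(idem)_{p,q}(z), w⟩ = min_{uv = w} (⟨ISS^(idem)_{p,r}(z), u⟩ + ⟨ISS^(idem)_{r,q}(z), v⟩)`,
the minimum over all `len(w) + 1` decompositions `w = uv`. -/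
theorem trop_issi_chen (z : ℕ → ℝ) (p r q : ℕ) (hpr : p ≤ r) (hrq : r ≤ q)
    (w : List ℤ) (hw : ∀ a ∈ w, a ≠ 0) :
    tropISS z p q w =
      (Finset.range (w.length + 1)).inf fun i =>
        tropISS z p r (w.take i) + tropISS z r q (w.drop i) :=
  trop_issi_chen_general z p r q hpr hrq w
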